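/- arXiv:2012.06522 — 6 statements merged into one kernel-verified Lean document; each statement's English description precedes it below -/
import Mathlib

section
/- Let s_2, ..., s_n be positive reals, and for each i set q_i = s_i / (∑_{j ≤ i} s_j), where partial sums include s_1 > 0. If each q_i ≤ 1, then ∑_{i=2}^n q_i ≤ 2·log((∑_{j ≤ n} s_j)/s_1) (natural logarithm). -/
open Finset

theorem telescoping_log_bound (n : ℕ) (s : ℕ → ℝ)
    (hs : ∀ i, 1 ≤ i → i ≤ n → 0 < s i)
    (q : ℕ → ℝ)
    (hq : ∀ i, q i = s i / ∑ j ∈ Icc 1 i, s j)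
    (hq1 : ∀ i, 2 ≤ i → i ≤ n → q i ≤ 1) :
    ∑ i ∈ Icc 2 n, q i ≤ 2 * Real.log ((∑ j ∈ Icc 1 n, s j) / s 1) := by
  induction n with
  | zero => simp
  | succ n ih =>
    rcases Nat.lt_or_ge n 1 with hn | hn
    · interval_cases n
      have h1 : (0:ℝ) < s 1 := hs 1 le_rfl le_rfl
      simp [div_self h1.ne']
    · -- n ≥ 1
      have hs' : ∀ i, 1 ≤ i → i ≤ n → 0 < s i := fun i h1 h2 => hs i h1 (h2.trans (Nat.le_succ n))
      have hq1' : ∀ i, 2 ≤ i → i ≤ n → q i ≤ 1 := fun i h1 h2 => hq1 i h1 (h2.trans (Nat.le_succ n))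
      have ih' := ih hs' hq1'
      have hSn : (0:ℝ) < ∑ j ∈ Icc 1 n, s j := by
        apply Finset.sum_pos
        · intro i hi
          simp only [mem_Icc] at hi
          exact hs' i hi.1 hi.2
        · exact ⟨1, by simp [hn]⟩
      have hsucc : (0:ℝ) < s (n+1) := hs (n+1) (by omega) le_rfl
      have hsplit : ∑ j ∈ Icc 1 (n+1), s j = (∑ j ∈ Icc 1 n, s j) + s (n+1) :=
        Finset.sum_Icc_succ_top (by omega) s
      have hS1 : (0:ℝ) < ∑ j ∈ Icc 1 (n+1), s j := by rw [hsplit]; positivity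
      have hqsplit : ∑ i ∈ Icc 2 (n+1), q i = (∑ i ∈ Icc 2 n, q i) + q (n+1) :=
        Finset.sum_Icc_succ_top (by omega) q
      have h1 : (0:ℝ) < s 1 := hs 1 le_rfl (by omega)
      -- key bound: q (n+1) ≤ 2 * log (S(n+1) / Sn)
      have hkey : q (n+1) ≤ 2 * Real.log ((∑ j ∈ Icc 1 (n+1), s j) / (∑ j ∈ Icc 1 n, s j)) := by
        set a := ∑ j ∈ Icc 1 n, s j with ha
        set b := s (n+1) with hb
        have hlog : Real.log (a / (a + b)) ≤ a / (a + b) - 1 :=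
          Real.log_le_sub_one_of_pos (by positivity)
        have hdiv : a / (a + b) - 1 = -(b / (a + b)) := by field_simp; ring
        have hloginv : Real.log ((a + b) / a) = - Real.log (a / (a + b)) := by
          rw [← Real.log_inv]; congr 1; field_simp
        rw [hq, hsplit]
        rw [hloginv]
        have hbq : b / (a + b) ≤ -Real.log (a / (a + b)) := by
          rw [hdiv] at hlog; linarith
        have hq0 : 0 ≤ b / (a + b) := by positivity
        linarith
      have hlogsum : Real.log ((∑ j ∈ Icc 1 n, s j) / s 1)
          + Real.log ((∑ j ∈ Icc 1 (n+1), s j) / (∑ j ∈ Icc 1 n, s j))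
          = Real.log ((∑ j ∈ Icc 1 (n+1), s j) / s 1) := by
        rw [Real.log_div (by positivity) h1.ne', Real.log_div hS1.ne' hSn.ne',
          Real.log_div hS1.ne' h1.ne']
        ring
      rw [hqsplit]
      linarith
end

section
/- Let Φ: ℝ^d → ℝ be convex and differentiable with Bregman divergence d_Φ. For points a_1,...,a_n ∈ ℝ^d, let φ_i denote the mean of the first i points. Then for each i ≥ 2, ∑_{j=1}^{i} d_Φ(a_j, φ_i) ≥ ∑_{j=1}^{i-1} d_Φ(a_j, φ_{i-1}) + d_Φ(a_i, φ_i), and consequently ∑_{j=1}^{n} d_Φ(a_j, φ_n) ≥ ∑_{j=2}^{n} d_Φ(a_j, φ_j). -/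
open Finset

-- gradient inequality for convex differentiable functions
lemma bregman_nonneg {E : Type*} [NormedAddCommGroup E] [NormedSpace ℝ E]
    {Φ : E → ℝ} (hconv : ConvexOn ℝ Set.univ Φ) (hdiff : Differentiable ℝ Φ)
    (x y : E) : Φ x + fderiv ℝ Φ x (y - x) ≤ Φ y := by
  rcases eq_or_ne y x with rfl | hne
  · simp
  · set v := y - x with hv
    set g : ℝ → ℝ := fun t => Φ (x + t • v) with hg
    have hgc : ConvexOn ℝ Set.univ g := by
      have := hconv.comp_affineMap
        ((AffineMap.lineMap x y : ℝ →ᵃ[ℝ] E))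
      simp only [Set.preimage_univ] at this
      suffices hgeq : g = Φ ∘ ⇑(AffineMap.lineMap x y : ℝ →ᵃ[ℝ] E) by
        rw [hgeq]; exact this
      funext t
      simp only [g, Function.comp_apply, AffineMap.lineMap_apply, v, vsub_eq_sub,
        vadd_eq_add]
      congr 1
      abel
    have hd : HasDerivAt g (fderiv ℝ Φ x v) 0 := by
      have h1 : HasDerivAt (fun t : ℝ => x + t • v) v 0 := by
        simpa using ((hasDerivAt_id (0:ℝ)).smul_const v).const_add x
      have h2 := ((hdiff (x + (0:ℝ) • v)).hasFDerivAt.comp_hasDerivAt 0 h1)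
      simp at h2
      exact h2
    have := hgc.le_slope_of_hasDerivAt (Set.mem_univ 0) (Set.mem_univ 1)
      one_pos hd
    have hslope : slope g 0 1 = Φ y - Φ x := by
      simp [slope, g, v]
    rw [hslope] at this
    linarith

theorem bregman_running_mean_monotone (d n : ℕ) (Φ : (Fin d → ℝ) → ℝ)
    (hconv : ConvexOn ℝ Set.univ Φ)
    (hdiff : Differentiable ℝ Φ)
    (dΦ : (Fin d → ℝ) → (Fin d → ℝ) → ℝ)
    (hdΦ : ∀ y x, dΦ y x = Φ y - Φ x - fderiv ℝ Φ x (y - x))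
    (a : ℕ → (Fin d → ℝ))
    (φ : ℕ → (Fin d → ℝ)) (hφ : ∀ i, φ i = (i : ℝ)⁻¹ • ∑ j ∈ Icc 1 i, a j) :
    (∀ i, 2 ≤ i → i ≤ n →
      (∑ j ∈ Icc 1 (i-1), dΦ (a j) (φ (i-1))) + dΦ (a i) (φ i)
        ≤ ∑ j ∈ Icc 1 i, dΦ (a j) (φ i)) ∧
    (∑ j ∈ Icc 2 n, dΦ (a j) (φ j)) ≤ ∑ j ∈ Icc 1 n, dΦ (a j) (φ n) := by
  -- expansion of a sum of Bregman divergences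
  have hsum : ∀ (m : ℕ) (x : Fin d → ℝ),
      ∑ j ∈ Icc 1 m, dΦ (a j) x =
        (∑ j ∈ Icc 1 m, Φ (a j)) - (m : ℝ) * Φ x
          - fderiv ℝ Φ x ((∑ j ∈ Icc 1 m, a j) - (m : ℝ) • x) := by
    intro m x
    have hcard : (Icc 1 m).card = m := by simp
    simp only [hdΦ]
    simp only [map_sub, map_smul, map_sum]
    rw [Finset.sum_sub_distrib, Finset.sum_sub_distrib, Finset.sum_sub_distrib,
      Finset.sum_const, Finset.sum_const, hcard]
    simp only [nsmul_eq_mul, smul_eq_mul]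
  -- mean minimizes sum of divergences
  have key : ∀ (m : ℕ), 1 ≤ m → ∀ x,
      ∑ j ∈ Icc 1 m, dΦ (a j) (φ m) ≤ ∑ j ∈ Icc 1 m, dΦ (a j) x := by
    intro m hm x
    have hm0 : (m : ℝ) ≠ 0 := Nat.cast_ne_zero.mpr (by omega)
    have hmean : (∑ j ∈ Icc 1 m, a j) = (m : ℝ) • φ m := by
      rw [hφ m, smul_smul, mul_inv_cancel₀ hm0, one_smul]
    rw [hsum m x, hsum m (φ m), hmean]
    have h1 : (m : ℝ) • φ m - (m : ℝ) • φ m = 0 := sub_self _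
    rw [h1, map_zero, sub_zero]
    have h2 : (m : ℝ) • φ m - (m : ℝ) • x = (m : ℝ) • (φ m - x) := by
      rw [smul_sub]
    rw [h2, map_smul, smul_eq_mul]
    have hb := bregman_nonneg hconv hdiff x (φ m)
    have hmpos : (0 : ℝ) < m := by positivity
    nlinarith [hb]
  have hnonneg : ∀ y x, 0 ≤ dΦ y x := by
    intro y x
    have := bregman_nonneg hconv hdiff x y
    rw [hdΦ]
    linarith
  -- part 1, without upper bound
  have part1 : ∀ i, 2 ≤ i →
      (∑ j ∈ Icc 1 (i-1), dΦ (a j) (φ (i-1))) + dΦ (a i) (φ i)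
        ≤ ∑ j ∈ Icc 1 i, dΦ (a j) (φ i) := by
    intro i hi
    obtain ⟨m, rfl⟩ : ∃ m, i = m + 1 := ⟨i - 1, by omega⟩
    have hm : 1 ≤ m := by omega
    rw [Finset.sum_Icc_succ_top (by omega)]
    simp only [Nat.add_sub_cancel]
    have := key m hm (φ (m + 1))
    linarith
  refine ⟨fun i h2 _ => part1 i h2, ?_⟩
  induction n with
  | zero => simp
  | succ k ih =>
    rcases Nat.lt_or_ge k 1 with hk | hk
    · interval_cases k
      · simp [hnonneg]
    · rw [Finset.sum_Icc_succ_top (by omega : 2 ≤ k + 1)]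
      have h1 := part1 (k + 1) (by omega)
      simp only [Nat.add_sub_cancel] at h1
      linarith
end

section
/- Under the hypotheses of the previous identity (q,r,s,w > 0, r = q+w, u,v < 1, p ∈ [0,1]), if additionally p·u + (1-p)·v ≤ u·v, then E[ s/(t+w) ] ≤ s/(q+w). -/
/-! Since `r = q + w`, the two outcomes give `t + w = r (1 - u)` and `t + w = r (1 - v)`, so the
expectation is `s / r · (p / (1 - u) + (1 - p) / (1 - v))`. Clearing the positive denominators,
the bracket is at most `1` exactly when `p u + (1 - p) v ≤ u v`. -/

lemma sub_mul_add_eq_mul_one_sub {q r w u : ℝ} (hrqw : r = q + w) :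
    q - u * r + w = r * (1 - u) := by
  subst hrqw; ring

lemma div_one_sub_add_div_one_sub_le_one {u v p : ℝ} (hu : u < 1) (hv : v < 1)
    (hbound : p * u + (1 - p) * v ≤ u * v) :
    p / (1 - u) + (1 - p) / (1 - v) ≤ 1 := by
  have hu' : 0 < 1 - u := sub_pos.mpr hu
  have hv' : 0 < 1 - v := sub_pos.mpr hv
  rw [div_add_div _ _ hu'.ne' hv'.ne', div_le_one (mul_pos hu' hv')]
  linarith

theorem barrier_expectation_bound_general (q r s w u v p : ℝ)
    (hr : 0 < r) (hs : 0 < s)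
    (hu : u < 1) (hv : v < 1)
    (hrqw : r = q + w)
    (hbound : p * u + (1 - p) * v ≤ u * v) :
    p * (s / ((q - u * r) + w)) + (1 - p) * (s / ((q - v * r) + w))
      ≤ s / (q + w) := by
  rw [sub_mul_add_eq_mul_one_sub hrqw, sub_mul_add_eq_mul_one_sub hrqw, ← hrqw]
  calc p * (s / (r * (1 - u))) + (1 - p) * (s / (r * (1 - v)))
      = s / r * (p / (1 - u) + (1 - p) / (1 - v)) := by
        simp only [div_mul_eq_div_div]; ring
    _ ≤ s / r * 1 :=
        mul_le_mul_of_nonneg_left (div_one_sub_add_div_one_sub_le_one hu hv hbound)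
          (div_pos hs hr).le
    _ = s / r := mul_one _

theorem barrier_expectation_bound (q r s w u v p : ℝ)
    (hq : 0 < q) (hr : 0 < r) (hs : 0 < s) (hw : 0 < w)
    (hu : u < 1) (hv : v < 1) (hp0 : 0 ≤ p) (hp1 : p ≤ 1)
    (hrqw : r = q + w)
    (hbound : p * u + (1 - p) * v ≤ u * v) :
    p * (s / ((q - u * r) + w)) + (1 - p) * (s / ((q - v * r) + w))
      ≤ s / (q + w) :=
  barrier_expectation_bound_general q r s w u v p hr hs hu hv hrqw hbound
end

section
/- Let A = {a_1, ..., a_n} ⊂ ℝ^d (n ≥ 2), let φ_i denote the mean of the first i points, let M be PSD, μ ∈ (0,1], and f a μ-similar cost as above. Fix i ≥ 2. Then for every finite set X of centers, f_X(a_i) / ( f_X(A_{i-1}) + f_{φ_i}(A_i) ) ≤ (2/μ)·f_{φ_i}^M(a_i) / f_{φ_i}^M(A_i) + 8/(μ(i-1)), where A_i = {a_1,...,a_i}, f_X(S) = ∑_{a∈S} f_X(a), and f^M denotes the squared Mahalanobis cost. -/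
open Matrix Finset

set_option maxHeartbeats 1600000 in
theorem sensitivity_upper_bound
    (d n : ℕ) (hn : 2 ≤ n)
    (a : ℕ → (Fin d → ℝ))
    (μ : ℝ) (hμ0 : 0 < μ) (hμ1 : μ ≤ 1)
    (M : Matrix (Fin d) (Fin d) ℝ) (hM : M.PosSemidef)
    (dM : (Fin d → ℝ) → (Fin d → ℝ) → ℝ)
    (hdM : ∀ v x, dM v x = (v - x) ⬝ᵥ M.mulVec (v - x))
    (f : (Fin d → ℝ) → (Fin d → ℝ) → ℝ)
    (hsim : ∀ x v, μ * dM v x ≤ f x v ∧ f x v ≤ dM v x)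
    (i : ℕ) (hi2 : 2 ≤ i) (hin : i ≤ n)
    (φi : Fin d → ℝ) (hφi : φi = (i : ℝ)⁻¹ • ∑ j ∈ Icc 1 i, a j)
    (X : Finset (Fin d → ℝ)) (hX : X.Nonempty) :
    X.inf' hX (fun x => f x (a i)) /
        ((∑ j ∈ Icc 1 (i - 1), X.inf' hX (fun x => f x (a j)))
          + ∑ j ∈ Icc 1 i, f φi (a j))
      ≤ (2 / μ) * (dM (a i) φi / ∑ j ∈ Icc 1 i, dM (a j) φi)
          + 8 / (μ * (i - 1 : ℝ)) := by
  -- Basic facts about the quadratic form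
  have hq : ∀ w : Fin d → ℝ, 0 ≤ w ⬝ᵥ M.mulVec w := by
    intro w
    simpa using hM.dotProduct_mulVec_nonneg w
  have hdM0 : ∀ v x, 0 ≤ dM v x := by
    intro v x; rw [hdM]; exact hq _
  -- relaxed triangle inequality
  have htri : ∀ y z x, dM y x ≤ 2 * dM y z + 2 * dM z x := by
    intro y z x
    rw [hdM, hdM, hdM]
    have h1 := hq ((y - z) - (z - x))
    have expand : (y - x) ⬝ᵥ M.mulVec (y - x) + ((y - z) - (z - x)) ⬝ᵥ M.mulVec ((y - z) - (z - x))
        = 2 * ((y - z) ⬝ᵥ M.mulVec (y - z)) + 2 * ((z - x) ⬝ᵥ M.mulVec (z - x)) := by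
      have hyx : y - x = (y - z) + (z - x) := by abel
      rw [hyx]
      simp only [Matrix.mulVec_add, Matrix.mulVec_sub, dotProduct_add, dotProduct_sub,
        add_dotProduct, sub_dotProduct]
      ring
    linarith
  -- symmetry
  have hsymm : ∀ v x, dM v x = dM x v := by
    intro v x
    rw [hdM, hdM, show x - v = -(v - x) from by abel, Matrix.mulVec_neg,
      dotProduct_neg, neg_dotProduct, neg_neg]
  set S := X.inf' hX (fun x => f x (a i)) with hS
  set F := ∑ j ∈ Icc 1 (i - 1), X.inf' hX (fun x => f x (a j)) with hF
  set G := ∑ j ∈ Icc 1 i, f φi (a j) with hG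
  set T := ∑ j ∈ Icc 1 i, dM (a j) φi with hT
  set K := dM (a i) φi with hK
  have hc1 : (1:ℕ) ≤ i := by omega
  have hcast : ((i - 1 : ℕ) : ℝ) = (i : ℝ) - 1 := by
    push_cast [Nat.cast_sub hc1]; ring
  have hc : (1:ℝ) ≤ (i:ℝ) - 1 := by
    have : (2:ℝ) ≤ (i:ℝ) := by exact_mod_cast hi2
    linarith
  have hcpos : (0:ℝ) < (i:ℝ) - 1 := by linarith
  -- nonnegativity of f
  have hf0 : ∀ x v, 0 ≤ f x v := by
    intro x v
    have := (hsim x v).1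
    nlinarith [hdM0 v x]
  have hinf0 : ∀ v, 0 ≤ X.inf' hX (fun x => f x v) := by
    intro v
    apply Finset.le_inf'
    intro x _
    exact hf0 x v
  have hS0 : 0 ≤ S := hinf0 _
  have hF0 : 0 ≤ F := Finset.sum_nonneg fun j _ => hinf0 _
  have hK0 : 0 ≤ K := hdM0 _ _
  have hT0 : 0 ≤ T := Finset.sum_nonneg fun j _ => hdM0 _ _
  have hKT : K ≤ T := by
    rw [hT, hK]
    exact Finset.single_le_sum (f := fun j => dM (a j) φi)
      (fun j _ => hdM0 _ _) (by simp [Finset.mem_Icc]; omega)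
  have hμTG : μ * T ≤ G := by
    rw [hT, hG, Finset.mul_sum]
    exact Finset.sum_le_sum fun j _ => (hsim φi (a j)).1
  have hG0 : 0 ≤ G := Finset.sum_nonneg fun j _ => hf0 _ _
  have hGT : G ≤ T := by
    rw [hT, hG]
    exact Finset.sum_le_sum fun j _ => (hsim φi (a j)).2
  -- per-point bound
  have per : ∀ j ∈ Icc 1 (i - 1),
      S ≤ 2 * K + 4 * dM (a j) φi + (4 / μ) * X.inf' hX (fun x => f x (a j)) := by
    intro j hj
    obtain ⟨xj, hxjX, hxj⟩ := Finset.exists_mem_eq_inf' hX (fun x => f x (a j))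
    have h1 : S ≤ f xj (a i) := Finset.inf'_le _ hxjX
    have h2 : f xj (a i) ≤ dM (a i) xj := (hsim xj (a i)).2
    have h3 : dM (a i) xj ≤ 2 * dM (a i) φi + 2 * dM φi xj := htri _ _ _
    have h4 : dM φi xj ≤ 2 * dM φi (a j) + 2 * dM (a j) xj := htri _ _ _
    have h5 : μ * dM (a j) xj ≤ f xj (a j) := (hsim xj (a j)).1
    have h6 : dM (a j) xj ≤ f xj (a j) / μ := by
      rw [le_div_iff₀ hμ0]; linarith
    have h7 : dM φi (a j) = dM (a j) φi := hsymm _ _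
    have h8 : f xj (a j) = X.inf' hX (fun x => f x (a j)) := hxj.symm
    have hd0 : 0 ≤ f xj (a j) := hf0 _ _
    rw [← h8]
    have : (4 / μ) * f xj (a j) = 4 * (f xj (a j) / μ) := by ring
    rw [this]
    nlinarith [h6]
  -- summed bound
  have hcard : (Icc 1 (i - 1)).card = i - 1 := by
    rw [Nat.card_Icc]; omega
  have hsumbd : ((i:ℝ) - 1) * S ≤ 2 * ((i:ℝ) - 1) * K + 4 * T + (4 / μ) * F := by
    have h := Finset.sum_le_sum per
    rw [Finset.sum_const, hcard] at h
    have hsplit : ∑ j ∈ Icc 1 (i - 1),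
        (2 * K + 4 * dM (a j) φi + (4 / μ) * X.inf' hX (fun x => f x (a j)))
        = (↑(i-1) : ℝ) * (2 * K) + 4 * (∑ j ∈ Icc 1 (i - 1), dM (a j) φi) + (4 / μ) * F := by
      rw [Finset.sum_add_distrib, Finset.sum_add_distrib, Finset.sum_const, hcard,
        ← Finset.mul_sum, ← Finset.mul_sum]
      push_cast
      ring
    rw [hsplit] at h
    have hsub : ∑ j ∈ Icc 1 (i - 1), dM (a j) φi ≤ T := by
      rw [hT]
      apply Finset.sum_le_sum_of_subset_of_nonneg
      · apply Finset.Icc_subset_Icc_right; omega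
      · intro j _ _; exact hdM0 _ _
    have hns : (i - 1 : ℕ) • S = ((i-1 : ℕ) : ℝ) * S := by
      rw [nsmul_eq_mul]
    rw [hns, hcast] at h
    rw [hcast] at hsplit
    nlinarith [h, hsub]
  clear_value S F G T K
  -- final arithmetic
  rcases eq_or_lt_of_le (by positivity : (0:ℝ) ≤ F + G) with hD | hD
  · rw [← hD, div_zero]
    have h1 : 0 ≤ (2 / μ) * (K / T) := by positivity
    have h2 : 0 ≤ 8 / (μ * ((i:ℝ) - 1)) := by positivity
    linarith
  · rw [div_le_iff₀ hD]
    rcases eq_or_lt_of_le hT0 with hT0' | hTpos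
    · -- T = 0 case: K = 0, G = 0
      have hKz : K = 0 := le_antisymm (hT0' ▸ hKT) hK0
      have hGz : G = 0 := le_antisymm (by linarith [hGT, hT0'.symm ▸ hGT]) hG0
      have hFS : ((i:ℝ) - 1) * S ≤ (4 / μ) * F := by
        rw [hKz, ← hT0'] at hsumbd
        linarith
      have hFpos : 0 < F := by rw [hGz] at hD; linarith
      rw [hKz, ← hT0', hGz]
      simp only [zero_div, mul_zero, zero_add, add_zero]
      rw [div_mul_eq_mul_div, le_div_iff₀ (by positivity : (0:ℝ) < μ * ((i:ℝ)-1))]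
      have hmul := mul_le_mul_of_nonneg_left hFS hμ0.le
      have hcanc : μ * ((4 / μ) * F) = 4 * F := by field_simp
      nlinarith [hmul, hcanc, hF0]
    · -- T > 0 case
      have h1 : 2 * ((i:ℝ) - 1) * K ≤ (2 * ((i:ℝ)-1) / μ) * (K / T) * (F + G) := by
        have hKT' : 0 ≤ K / T := by positivity
        have hstep : μ * K ≤ (K / T) * (F + G) := by
          have h := mul_le_mul_of_nonneg_left (show μ * T ≤ F + G by linarith) hKT'
          calc μ * K = (K / T) * (μ * T) := by field_simp
            _ ≤ (K / T) * (F + G) := h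
        have h2 := mul_le_mul_of_nonneg_left hstep
          (by positivity : (0:ℝ) ≤ 2 * ((i:ℝ)-1) / μ)
        calc 2 * ((i:ℝ) - 1) * K = (2 * ((i:ℝ)-1) / μ) * (μ * K) := by
              field_simp
          _ ≤ (2 * ((i:ℝ)-1) / μ) * (K / T * (F + G)) := h2
          _ = (2 * ((i:ℝ)-1) / μ) * (K / T) * (F + G) := by ring
      have h2 : 4 * T + (4 / μ) * F ≤ (8 / μ) * (F + G) := by
        have hTle : 4 * T ≤ (4 / μ) * G := by
          rw [div_mul_eq_mul_div, le_div_iff₀ hμ0]; nlinarith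
        have hFle : (4 / μ) * F ≤ (4 / μ) * (F + G) := by
          apply mul_le_mul_of_nonneg_left _ (by positivity)
          linarith
        have hGle : (4 / μ) * G ≤ (4 / μ) * (F + G) := by
          apply mul_le_mul_of_nonneg_left _ (by positivity)
          linarith
        have h8 : (8 / μ) * (F + G) = (4 / μ) * (F + G) + (4 / μ) * (F + G) := by ring
        linarith
      have hmain : ((i:ℝ) - 1) * S ≤ ((i:ℝ)-1) * (((2 / μ) * (K / T) + 8 / (μ * ((i:ℝ)-1))) * (F + G)) := by
        have hrw : ((i:ℝ)-1) * (((2 / μ) * (K / T) + 8 / (μ * ((i:ℝ)-1))) * (F + G))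
            = (2 * ((i:ℝ)-1) / μ) * (K / T) * (F + G) + (8 / μ) * (F + G) := by
          field_simp
        rw [hrw]
        linarith [hsumbd, h1, h2]
      exact le_of_mul_le_mul_left hmain hcpos
end

section
/- Let A ⊂ ℝ^d be a finite dataset, λ > 0, and for a finite set X of centers define cost_DP(A, X) = ∑_{a∈A} f_X(a) + λ|X|, where f_X(a) = min_{x∈X} f_x(a) with f a nonnegative cost. Suppose C is a weighted set satisfying |f_X(C) - f_X(A)| ≤ ε(f_X(A) + f_φ(A)) for all finite X, where φ is the mean of A. Let X_C minimize cost_DP(C, ·) and X_A minimize cost_DP(A, ·) over all finite center sets. Then cost_DP(A, X_C) ≤ cost_DP(A, X_A) + ε( f_{X_C}(A) + f_{X_A}(A) + 2 f_φ(A) ). -/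
open Finset

theorem dp_means_coreset_guarantee
    (d : ℕ) (f : (Fin d → ℝ) → (Fin d → ℝ) → ℝ) (hf : ∀ x a, 0 ≤ f x a)
    (A : Finset (Fin d → ℝ)) (hA : A.Nonempty)
    (φ : Fin d → ℝ) (hφ : φ = (A.card : ℝ)⁻¹ • ∑ a ∈ A, a)
    (Cs : Finset (Fin d → ℝ)) (w : (Fin d → ℝ) → ℝ)
    (fA fC : Finset (Fin d → ℝ) → ℝ)
    (hfA : ∀ (X : Finset (Fin d → ℝ)) (hX : X.Nonempty),
      fA X = ∑ a ∈ A, X.inf' hX (fun x => f x a))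
    (hfC : ∀ (X : Finset (Fin d → ℝ)) (hX : X.Nonempty),
      fC X = ∑ c ∈ Cs, w c * X.inf' hX (fun x => f x c))
    (ε lam : ℝ) (hε : 0 < ε) (hlam : 0 < lam)
    (hcoreset : ∀ X : Finset (Fin d → ℝ), X.Nonempty →
      |fC X - fA X| ≤ ε * (fA X + ∑ a ∈ A, f φ a))
    (costA costC : Finset (Fin d → ℝ) → ℝ)
    (hcostA : ∀ X, costA X = fA X + lam * X.card)
    (hcostC : ∀ X, costC X = fC X + lam * X.card)
    (XC XA : Finset (Fin d → ℝ)) (hXC : XC.Nonempty) (hXA : XA.Nonempty)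
    (hXCopt : ∀ X : Finset (Fin d → ℝ), X.Nonempty → costC XC ≤ costC X)
    (hXAopt : ∀ X : Finset (Fin d → ℝ), X.Nonempty → costA XA ≤ costA X) :
    costA XC ≤ costA XA + ε * (fA XC + fA XA + 2 * ∑ a ∈ A, f φ a) := by
  have h1 := abs_le.mp (hcoreset XC hXC)
  have h2 := abs_le.mp (hcoreset XA hXA)
  have h3 := hXCopt XA hXA
  rw [hcostC XC, hcostC XA] at h3
  rw [hcostA XC, hcostA XA]
  linarith [h1.1, h1.2, h2.1, h2.2]
end

section
/- Let x* ∈ (0,1], K, K' > 0, and let r: X → [0, x*] be a measurable function on a probability space X whose CDF G satisfies G(x*/K) ≤ exp(-1/K'). Let X_1, ..., X_m, X_{m+1} be i.i.d. samples from X. Then P( K·max_{j≤m} r(X_j) ≤ r(X_{m+1}) ) ≤ exp(-m/K'). -/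
/-! Since `r (X_{m+1}) ≤ x*`, the event forces every `r (X_j)` with `j ≤ m` below `x* / K`; by
independence this has probability `G (x* / K) ^ m ≤ exp (-m / K')`. -/

open MeasureTheory Finset

theorem Finset.le_div_of_mul_sup'_le {ι : Type*} {s : Finset ι} (hs : s.Nonempty) {f : ι → ℝ}
    {K c : ℝ} (hK : 0 < K) (h : K * s.sup' hs f ≤ c) {j : ι} (hj : j ∈ s) : f j ≤ c / K := by
  rw [le_div_iff₀' hK]
  exact (mul_le_mul_of_nonneg_left (le_sup' f hj) hK.le).trans h

theorem MeasureTheory.Measure.pi_castSucc_mem {m : ℕ} {X : Fin (m + 1) → Type*}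
    [∀ i, MeasurableSpace (X i)] (μ : ∀ i, Measure (X i)) [∀ i, IsProbabilityMeasure (μ i)]
    (A : ∀ j : Fin m, Set (X j.castSucc)) :
    Measure.pi μ {ω | ∀ j, ω j.castSucc ∈ A j} = ∏ j, μ j.castSucc (A j) := by
  have hA : {ω : ∀ i, X i | ∀ j, ω j.castSucc ∈ A j}
      = Set.univ.pi (Fin.snoc (α := fun i => Set (X i)) A Set.univ) := by
    ext ω
    simp [Fin.forall_fin_succ']
  rw [hA, Measure.pi_pi, Fin.prod_univ_castSucc]
  simp

theorem empirical_sensitivity_bound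
    {X : Type*} [MeasurableSpace X] (ν : Measure X) [IsProbabilityMeasure ν]
    (r : X → ℝ)
    (xstar : ℝ)
    (hrange : ∀ x, r x ∈ Set.Icc 0 xstar)
    (K K' : ℝ) (hK : 0 < K)
    (G : ℝ → ℝ) (hG : ∀ y, G y = (ν {x | r x ≤ y}).toReal)
    (hcdf : G (xstar / K) ≤ Real.exp (-1 / K'))
    (m : ℕ) (hm : 0 < m) :
    ((Measure.pi (fun _ : Fin (m + 1) => ν))
        {ω | K * (univ : Finset (Fin m)).sup' (by simpa [Finset.univ_nonempty_iff] using Fin.pos_iff_nonempty.mp hm)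
              (fun j => r (ω j.castSucc)) ≤ r (ω (Fin.last m))}).toReal
      ≤ Real.exp (-(m : ℝ) / K') := by
  calc _ ≤ ((Measure.pi fun _ : Fin (m + 1) => ν)
          {ω | ∀ j : Fin m, ω j.castSucc ∈ {x | r x ≤ xstar / K}}).toReal :=
        ENNReal.toReal_mono (measure_ne_top _ _) <| measure_mono fun ω hω j =>
          (le_div_of_mul_sup'_le _ hK (le_trans hω (hrange _).2) (mem_univ j) :)
    _ = G (xstar / K) ^ m := by
        rw [Measure.pi_castSucc_mem, prod_const, card_univ, Fintype.card_fin, ENNReal.toReal_pow,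
          hG]
    _ ≤ Real.exp (-1 / K') ^ m := pow_le_pow_left₀ (by rw [hG]; positivity) hcdf m
    _ = Real.exp (-(m : ℝ) / K') := by rw [← Real.exp_nat_mul]; ring_nf
end
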